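/- SL₂(ℤ) acts transitively on the additive subgroups of Z_n² of a given cotype: for every n ≥ 1 and all additive subgroups K₁, K₂ ≤ Z_n² that are isomorphic as abstract additive groups (equivalently, of the same cotype), there exists A ∈ SL₂(ℤ) such that the image of K₁ under the action of A equals K₂. -/

import Mathlib

/-!
The preimage `L ≤ ℤ²` of a subgroup `K ≤ Z_n²` under reduction mod `n` has finite index, so
a Smith normal form gives a basis `b₀, b₁` of `ℤ²` and integers `c₀, c₁` with
`L = ℤ c₀b₀ ⊕ ℤ c₁b₁`. Up to the sign of `b₁`, the basis is the column basis of a matrix in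
`SL₂(ℤ)`, which therefore carries the diagonal subgroup `⟨(c₀, 0), (0, c₁)⟩` onto `K`. A second
matrix, built from a Bézout relation, turns `⟨(a, 0), (0, b)⟩` into
`⟨(gcd a b, 0), (0, lcm a b)⟩`, and replacing each entry by its gcd with `n` puts `K` in the
orbit of a diagonal subgroup `D(d₁, d₂)` with `d₁ ∣ d₂ ∣ n`. Now `D(d₁, d₂) ≅ ℤ/(n/d₁) × ℤ/(n/d₂)`
has exponent `n/d₁` and order `(n/d₁)(n/d₂)`, so isomorphic subgroups lie in the orbit of the
same `D(d₁, d₂)`.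
-/

def sl2Hom (n : ℕ) (A : Matrix.SpecialLinearGroup (Fin 2) ℤ) :
    (ZMod n × ZMod n) →+ (ZMod n × ZMod n) where
  toFun x := (((A.1 0 0 : ℤ) : ZMod n) * x.1 + ((A.1 0 1 : ℤ) : ZMod n) * x.2,
              ((A.1 1 0 : ℤ) : ZMod n) * x.1 + ((A.1 1 1 : ℤ) : ZMod n) * x.2)
  map_zero' := by simp
  map_add' x y := by
    simp only [Prod.fst_add, Prod.snd_add, Prod.mk_add_mk, Prod.mk.injEq]
    constructor <;> ring

open AddSubgroup Module
open scoped MatrixGroups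

lemma AddSubgroup.prod_zmultiples {G H : Type*} [AddCommGroup G] [AddCommGroup H] (x : G) (y : H) :
    (zmultiples x).prod (zmultiples y) = zmultiples (x, 0) ⊔ zmultiples (0, y) := by
  refine le_antisymm ?_ (sup_le ?_ ?_)
  · rintro p ⟨⟨j, hj⟩, ⟨k, hk⟩⟩
    have hp : p = j • (x, 0) + k • (0, y) := by ext <;> simp [← hj, ← hk]
    rw [hp]
    exact add_mem (mem_sup_left (zsmul_mem_zmultiples _ _))
      (mem_sup_right (zsmul_mem_zmultiples _ _))
  all_goals simp [zmultiples_le, mem_prod]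

lemma AddSubgroup.zmultiples_sup_zmultiples_add_zsmul {G : Type*} [AddCommGroup G] (x y : G)
    (k : ℤ) : zmultiples x ⊔ zmultiples (y + k • x) = zmultiples x ⊔ zmultiples y := by
  have hx {z : G} : x ∈ zmultiples x ⊔ zmultiples z := mem_sup_left (mem_zmultiples x)
  refine le_antisymm (sup_le (zmultiples_le.mpr hx) (zmultiples_le.mpr ?_))
    (sup_le (zmultiples_le.mpr hx) (zmultiples_le.mpr ?_))
  · exact add_mem (mem_sup_right (mem_zmultiples y)) (zsmul_mem hx k)
  · simpa using sub_mem (mem_sup_right (mem_zmultiples (y + k • x))) (zsmul_mem hx k)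

lemma Submodule.toAddSubgroup_eq_zmultiples_sup_of_basis {M : Type*} [AddCommGroup M]
    {N : Submodule ℤ M} (v : Basis (Fin 2) ℤ N) :
    N.toAddSubgroup = zmultiples (v 0 : M) ⊔ zmultiples (v 1 : M) := by
  ext x
  simp only [Submodule.mem_toAddSubgroup, v.mem_submodule_iff', Fin.sum_univ_two,
    AddSubgroup.mem_sup, mem_zmultiples_iff]
  constructor
  · rintro ⟨c, rfl⟩
    exact ⟨_, ⟨c 0, rfl⟩, _, ⟨c 1, rfl⟩, rfl⟩
  · rintro ⟨_, ⟨j, rfl⟩, _, ⟨k, rfl⟩, rfl⟩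
    exact ⟨![j, k], rfl⟩

lemma Submodule.finrank_eq_of_index_ne_zero {M : Type*} [AddCommGroup M] [Free ℤ M]
    [Module.Finite ℤ M] {N : Submodule ℤ M} (h : N.toAddSubgroup.index ≠ 0) :
    finrank ℤ N = finrank ℤ M := by
  obtain ⟨m, snf⟩ := N.smithNormalForm (Free.chooseBasis ℤ M)
  rw [finrank_eq_card_basis snf.bN, finrank_eq_card_basis snf.bM,
    ← snf.toAddSubgroup_index_ne_zero_iff.mp h, Fintype.card_fin]

lemma exists_specialLinearGroup_of_basis (b : Basis (Fin 2) ℤ (ℤ × ℤ)) :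
    ∃ (A : SL(2, ℤ)) (ε : ℤˣ), b 0 = (A 0 0, A 1 0) ∧ b 1 = ε • (A 0 1, A 1 1) := by
  obtain ⟨ε, hε⟩ : IsUnit ((b 0).1 * (b 1).2 - (b 1).1 * (b 0).2) := by
    simpa [Basis.det_apply, Matrix.det_fin_two, Basis.toMatrix_apply] using
      (Basis.finTwoProd ℤ).isUnit_det b
  have hεε : (ε * ε : ℤ) = 1 := Int.units_coe_mul_self ε
  refine ⟨⟨!![(b 0).1, ε * (b 1).1; (b 0).2, ε * (b 1).2], ?_⟩, ε, rfl, ?_⟩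
  · rw [Matrix.det_fin_two_of]
    linear_combination hεε - (ε : ℤ) * hε
  · ext <;> simp [Units.smul_def, ← mul_assoc, hεε]

lemma ZMod.zmultiples_intCast_eq_gcd (n : ℕ) (a : ℤ) :
    zmultiples (a : ZMod n) = zmultiples ((a.gcd n : ℤ) : ZMod n) := by
  have h := congrArg (map (Int.castAddHom (ZMod n))) (Int.zmultiples_sup a n)
  simpa [AddSubgroup.map_sup, AddMonoidHom.map_zmultiples] using h

lemma ZMod.card_zmultiples_natCast {n d : ℕ} (hn : n ≠ 0) (hd : d ∣ n) :
    Nat.card (zmultiples (d : ZMod n)) = n / d := by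
  rw [Nat.card_zmultiples, ZMod.addOrderOf_coe d hn, Nat.gcd_eq_right hd]

lemma Int.natAbs_mul_eq_lcm {a b a₁ : ℤ} (hg : a.gcd b ≠ 0) (ha : a = a.gcd b * a₁) :
    (a₁ * b).natAbs = a.lcm b := by
  refine Nat.eq_of_mul_eq_mul_left (Nat.pos_of_ne_zero hg) ?_
  rw [Int.gcd_mul_lcm, ← Int.natAbs_mul, ← Int.natAbs_natCast (a.gcd b), ← Int.natAbs_mul]
  congr 1
  linear_combination -b * ha

variable {n : ℕ}

@[simp]
lemma sl2Hom_apply (A : SL(2, ℤ)) (x : ZMod n × ZMod n) :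
    sl2Hom n A x = ((A 0 0 : ZMod n) * x.1 + (A 0 1 : ZMod n) * x.2,
      (A 1 0 : ZMod n) * x.1 + (A 1 1 : ZMod n) * x.2) := rfl

lemma sl2Hom_mul (A B : SL(2, ℤ)) : sl2Hom n (A * B) = (sl2Hom n A).comp (sl2Hom n B) := by
  ext x <;> simp [Matrix.mul_apply, Fin.sum_univ_two] <;> ring

lemma sl2Hom_one : sl2Hom n 1 = AddMonoidHom.id _ := by
  ext x <;> simp

lemma map_sl2Hom_mul (A B : SL(2, ℤ)) (K : AddSubgroup (ZMod n × ZMod n)) :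
    K.map (sl2Hom n (A * B)) = (K.map (sl2Hom n B)).map (sl2Hom n A) := by
  rw [sl2Hom_mul, map_map]

lemma map_sl2Hom_inv_map (A : SL(2, ℤ)) (K : AddSubgroup (ZMod n × ZMod n)) :
    (K.map (sl2Hom n A)).map (sl2Hom n A⁻¹) = K := by
  rw [← map_sl2Hom_mul, inv_mul_cancel, sl2Hom_one, map_id]

lemma sl2Hom_injective (A : SL(2, ℤ)) : Function.Injective (sl2Hom n A) := by
  refine Function.LeftInverse.injective (g := sl2Hom n A⁻¹) fun x => ?_
  rw [← AddMonoidHom.comp_apply, ← sl2Hom_mul, inv_mul_cancel, sl2Hom_one, AddMonoidHom.id_apply]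

def diagSubgroup (n : ℕ) (a b : ℤ) : AddSubgroup (ZMod n × ZMod n) :=
  (zmultiples (a : ZMod n)).prod (zmultiples (b : ZMod n))

lemma map_diagSubgroup (a b : ℤ) (f : (ZMod n × ZMod n) →+ (ZMod n × ZMod n)) :
    (diagSubgroup n a b).map f = zmultiples (f (a, 0)) ⊔ zmultiples (f (0, b)) := by
  rw [diagSubgroup, prod_zmultiples, AddSubgroup.map_sup, AddMonoidHom.map_zmultiples,
    AddMonoidHom.map_zmultiples]

lemma diagSubgroup_eq_gcd (a b : ℤ) :
    diagSubgroup n a b = diagSubgroup n (a.gcd n) (b.gcd n) := by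
  rw [diagSubgroup, diagSubgroup, ZMod.zmultiples_intCast_eq_gcd n a,
    ZMod.zmultiples_intCast_eq_gcd n b]

lemma diagSubgroup_neg_right (a b : ℤ) : diagSubgroup n a (-b) = diagSubgroup n a b := by
  simp [diagSubgroup, zmultiples_neg]

lemma exists_map_diagSubgroup_eq_gcd_lcm (a b : ℤ) :
    ∃ A : SL(2, ℤ), (diagSubgroup n a b).map (sl2Hom n A) =
      diagSubgroup n (a.gcd b) (a.lcm b) := by
  obtain hg | hg := eq_or_ne (a.gcd b) 0
  · obtain ⟨rfl, rfl⟩ := Int.gcd_eq_zero_iff.mp hg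
    exact ⟨1, by simp [sl2Hom_one]⟩
  set g := a.gcd b
  obtain ⟨a₁, ha⟩ : (g : ℤ) ∣ a := Int.gcd_dvd_left a b
  obtain ⟨b₁, hb⟩ : (g : ℤ) ∣ b := Int.gcd_dvd_right a b
  set u := a.gcdA b
  set v := a.gcdB b
  have hbezout : (g : ℤ) = a * u + b * v := Int.gcd_eq_gcd_ab a b
  have hdet : u * a₁ + v * b₁ = 1 := by
    refine mul_left_cancel₀ (Int.natCast_ne_zero.mpr hg) ?_
    linear_combination -hbezout - u * ha - v * hb
  set m := a₁ * b
  have hm : m.natAbs = a.lcm b := Int.natAbs_mul_eq_lcm hg ha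
  have hma : b₁ * a = m := by linear_combination b₁ * ha - a₁ * hb
  set A : SL(2, ℤ) := ⟨!![u, v; -b₁, a₁], by rw [Matrix.det_fin_two_of]; linear_combination hdet⟩
  set x : ZMod n × ZMod n := ((u * a : ℤ), (-m : ℤ))
  set y : ZMod n × ZMod n := ((v * b : ℤ), (m : ℤ))
  have hx : sl2Hom n A (a, 0) = x := by
    rw [sl2Hom_apply]
    ext
    · simp [A, x]
    · simp [A, x, ← hma]
  have hy : sl2Hom n A (0, b) = y := by
    rw [sl2Hom_apply]
    ext <;> simp [A, y, m]
  have hyx : y + (1 : ℤ) • x = (((g : ℤ) : ZMod n), 0) := by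
    ext
    · simp [x, y, hbezout]; ring
    · simp [x, y]
  have hxg : x + (-(u * a₁)) • (((g : ℤ) : ZMod n), 0) = (0, ((-m : ℤ) : ZMod n)) := by
    ext
    · simp [x, ha]; ring
    · simp [x]
  refine ⟨A, ?_⟩
  rw [map_diagSubgroup, hx, hy, ← zmultiples_sup_zmultiples_add_zsmul x y 1, hyx, sup_comm,
    ← zmultiples_sup_zmultiples_add_zsmul _ x, hxg, ← prod_zmultiples]
  change diagSubgroup n g (-m) = _
  obtain h | h := Int.natAbs_eq m <;> rw [h, hm] <;> simp [diagSubgroup_neg_right]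

lemma exists_map_diagSubgroup_eq (hn : n ≠ 0) (K : AddSubgroup (ZMod n × ZMod n)) :
    ∃ (A : SL(2, ℤ)) (a b : ℤ), (diagSubgroup n a b).map (sl2Hom n A) = K := by
  have : NeZero n := ⟨hn⟩
  let π : ℤ × ℤ →+ ZMod n × ZMod n := (Int.castAddHom _).prodMap (Int.castAddHom _)
  have hπ : Function.Surjective π :=
    Prod.map_surjective.mpr ⟨ZMod.intCast_surjective, ZMod.intCast_surjective⟩
  set L := (K.comap π).toIntSubmodule
  have hL : L.toAddSubgroup.index ≠ 0 := by
    rw [toIntSubmodule_toAddSubgroup, index_comap_of_surjective _ hπ]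
    exact index_ne_zero_of_finite
  obtain ⟨b, c, v, hv⟩ := Submodule.exists_smith_normal_form_of_rank_eq (Basis.finTwoProd ℤ)
    (Submodule.finrank_eq_of_index_ne_zero hL)
  obtain ⟨A, ε, hb₀, hb₁⟩ := exists_specialLinearGroup_of_basis b
  refine ⟨A, c 0, ε * c 1, ?_⟩
  have hK : K = L.toAddSubgroup.map π := by
    rw [toIntSubmodule_toAddSubgroup, map_comap_eq_self_of_surjective hπ]
  rw [hK, Submodule.toAddSubgroup_eq_zmultiples_sup_of_basis v, AddSubgroup.map_sup,
    AddMonoidHom.map_zmultiples, AddMonoidHom.map_zmultiples, hv, hv, hb₀, hb₁, map_diagSubgroup]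
  congr 2 <;> ext <;> simp [π, Units.smul_def] <;> ring

lemma exists_map_diagSubgroup_eq_of_dvd (hn : n ≠ 0) (K : AddSubgroup (ZMod n × ZMod n)) :
    ∃ (A : SL(2, ℤ)) (d₁ d₂ : ℕ), d₁ ∣ d₂ ∧ d₂ ∣ n ∧
      (diagSubgroup n d₁ d₂).map (sl2Hom n A) = K := by
  obtain ⟨A, a, b, rfl⟩ := exists_map_diagSubgroup_eq hn K
  obtain ⟨B, hB⟩ := exists_map_diagSubgroup_eq_gcd_lcm (n := n) a b
  refine ⟨A * B⁻¹, Int.gcd (a.gcd b) n, Int.gcd (a.lcm b) n,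
    Int.gcd_dvd_gcd_of_dvd_left _ ((Int.gcd_dvd_left a b).trans (Int.dvd_lcm_left a b)),
    Int.natCast_dvd_natCast.mp (Int.gcd_dvd_right _ _), ?_⟩
  rw [← diagSubgroup_eq_gcd, ← hB, map_sl2Hom_mul, map_sl2Hom_inv_map]

lemma card_diagSubgroup (hn : n ≠ 0) {d₁ d₂ : ℕ} (h₁ : d₁ ∣ n) (h₂ : d₂ ∣ n) :
    Nat.card (diagSubgroup n d₁ d₂) = n / d₁ * (n / d₂) := by
  rw [diagSubgroup, Nat.card_congr (prodEquiv _ _).toEquiv, Nat.card_prod, Int.cast_natCast,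
    Int.cast_natCast, ZMod.card_zmultiples_natCast hn h₁, ZMod.card_zmultiples_natCast hn h₂]

lemma exponent_diagSubgroup (hn : n ≠ 0) {d₁ d₂ : ℕ} (h₁ : d₁ ∣ n) (h₂ : d₂ ∣ n) :
    AddMonoid.exponent (diagSubgroup n d₁ d₂) = (n / d₁).lcm (n / d₂) := by
  rw [diagSubgroup, AddMonoid.exponent_eq_of_addEquiv (prodEquiv _ _), AddMonoid.exponent_prod,
    IsAddCyclic.exponent_eq_card, IsAddCyclic.exponent_eq_card, Int.cast_natCast,
    Int.cast_natCast, ZMod.card_zmultiples_natCast hn h₁, ZMod.card_zmultiples_natCast hn h₂,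
    lcm_eq_nat_lcm]

lemma eq_of_addEquiv_diagSubgroup (hn : n ≠ 0) {d₁ d₂ e₁ e₂ : ℕ} (hd : d₁ ∣ d₂) (hdn : d₂ ∣ n)
    (he : e₁ ∣ e₂) (hen : e₂ ∣ n) (φ : diagSubgroup n d₁ d₂ ≃+ diagSubgroup n e₁ e₂) :
    d₁ = e₁ ∧ d₂ = e₂ := by
  have hexp := AddMonoid.exponent_eq_of_addEquiv φ
  have hcard := Nat.card_congr φ.toEquiv
  rw [exponent_diagSubgroup hn (hd.trans hdn) hdn, exponent_diagSubgroup hn (he.trans hen) hen,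
    Nat.lcm_eq_left (Nat.div_dvd_div_left hdn hd), Nat.lcm_eq_left (Nat.div_dvd_div_left hen he)]
    at hexp
  rw [card_diagSubgroup hn (hd.trans hdn) hdn, card_diagSubgroup hn (he.trans hen) hen, hexp]
    at hcard
  have he₁ : n / e₁ ≠ 0 :=
    (Nat.div_ne_zero_iff_of_dvd (he.trans hen)).mpr ⟨hn, ne_zero_of_dvd_ne_zero hn (he.trans hen)⟩
  refine ⟨?_, ?_⟩
  · rw [← Nat.div_div_self (hd.trans hdn) hn, hexp, Nat.div_div_self (he.trans hen) hn]
  · rw [← Nat.div_div_self hdn hn, Nat.eq_of_mul_eq_mul_left (Nat.pos_of_ne_zero he₁) hcard,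
      Nat.div_div_self hen hn]

/-- `SL₂(ℤ)` acts transitively on the additive subgroups of `Z_n²` of a given
cotype: if two additive subgroups of `Z_n²` are isomorphic as abstract additive
groups then some `A ∈ SL₂(ℤ)` maps one onto the other. -/
theorem statement10 (n : ℕ) (hn : 1 ≤ n)
    (K₁ K₂ : AddSubgroup (ZMod n × ZMod n)) (h : Nonempty (K₁ ≃+ K₂)) :
    ∃ A : Matrix.SpecialLinearGroup (Fin 2) ℤ, K₁.map (sl2Hom n A) = K₂ := by
  have hn₀ : n ≠ 0 := Nat.one_le_iff_ne_zero.mp hn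
  obtain ⟨A₁, d₁, d₂, hd, hdn, rfl⟩ := exists_map_diagSubgroup_eq_of_dvd hn₀ K₁
  obtain ⟨A₂, e₁, e₂, he, hen, rfl⟩ := exists_map_diagSubgroup_eq_of_dvd hn₀ K₂
  obtain ⟨φ⟩ := h
  obtain ⟨rfl, rfl⟩ := eq_of_addEquiv_diagSubgroup hn₀ hd hdn he hen
    (((equivMapOfInjective _ _ (sl2Hom_injective A₁)).trans φ).trans
      (equivMapOfInjective _ _ (sl2Hom_injective A₂)).symm)
  exact ⟨A₂ * A₁⁻¹, by rw [map_sl2Hom_mul, map_sl2Hom_inv_map]⟩
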